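/- Define P_{(3,0)}(n) := ∑_{j=-∞}^{∞} q^{10j^2+3j} [2n choose n-5j]_q − ∑_{j=-∞}^{∞} q^{10j^2+13j+4} [2n choose n-5j-4]_q. Then P_{(3,0)}(n) satisfies P_{(3,0)}(n) = (1 + q^{2n-3} + q^{2n-2}) P_{(3,0)}(n-1) − q^{4n-7} P_{(3,0)}(n-2) for n ≥ 3, with P_{(3,0)}(1) = 1 and P_{(3,0)}(2) = 1 + q^2. -/

import Mathlib

/-!
Write `S α β n = ∑_j q^(10j² + αj) [2n; n - 5j - β]` (`qbinSum`). Then `P30 n = S 3 0 n - q S 7 1 n`,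
and with the companion `Q30 n = S 8 1 n - S 8 3 n` one has the first-order system

  `P(n+1) = P(n) + q^(n+1) Q(n)`,
  `q Q(n+1) = q^n (1 + q - q^(2n)) P(n) + q^(2n+1) (1 + q) Q(n)`.

Eliminating `Q` gives the recurrence, and `P(0) = 1`, `Q(0) = 0` give the initial values. Each
relation of the system is a finite linear combination, with coefficients in `ℤ[q, q⁻¹, q^n]`, of
identities between the sums `S`: the two-step q-Pascal rule from level `n + 1` to level `n`, the
contiguous relation `(1 - q^k) [M; k] = (1 - q^(M+1-k)) [M; k-1]` summed against the weights, and the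
reflections `j ↦ -j`, `j ↦ -1 - j` combined with the symmetry `[M; k] = [M; M - k]`.
-/

open Finset

noncomputable section

abbrev F := RatFunc ℚ

/-- The variable `q`, a transcendental element. -/
def q : F := RatFunc.X

/-- `(b;b)_n = ∏_{i=1}^n (1 - b^i)` -/
def pq (b : F) (n : ℕ) : F := ∏ i ∈ Finset.range n, (1 - b ^ (i + 1))

/-- Gaussian binomial coefficient in base `b`, zero when `k < 0` or `k > a`. -/
def qbin (b : F) (a k : ℤ) : F :=
  if 0 ≤ k ∧ k ≤ a then pq b a.toNat / (pq b k.toNat * pq b (a - k).toNat) else 0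

/-- Primed Gaussian binomial: equals 1 when `a < 0` and `k = 0`. -/
def qbin' (b : F) (a k : ℤ) : F :=
  if a < 0 ∧ k = 0 then 1 else qbin b a k

/-- The cylindric partition polynomial `P_{(3,0)}(n)`. -/
def P30 (n : ℕ) : F :=
  (∑ᶠ j : ℤ, q ^ (10 * j ^ 2 + 3 * j) * qbin q (2 * (n : ℤ)) ((n : ℤ) - 5 * j)) -
    ∑ᶠ j : ℤ, q ^ (10 * j ^ 2 + 13 * j + 4) * qbin q (2 * (n : ℤ)) ((n : ℤ) - 5 * j - 4)

lemma q_ne_zero : q ≠ 0 := RatFunc.X_ne_zero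

lemma q_pow_succ_ne_one (k : ℕ) : q ^ (k + 1) ≠ 1 := by
  intro h
  have h' := congrArg RatFunc.intDegree h
  rw [q, ← RatFunc.algebraMap_X, ← map_pow, RatFunc.intDegree_polynomial,
    RatFunc.intDegree_one, Polynomial.natDegree_X_pow] at h'
  omega

section GaussianBinomial

variable {b : F}

lemma pq_succ (b : F) (n : ℕ) : pq b (n + 1) = pq b n * (1 - b ^ (n + 1)) :=
  prod_range_succ _ _

lemma pq_ne_zero (hb : ∀ k : ℕ, b ^ (k + 1) ≠ 1) (n : ℕ) : pq b n ≠ 0 :=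
  prod_ne_zero_iff.mpr fun i _ => sub_ne_zero.mpr (hb i).symm

lemma pq_zero (b : F) : pq b 0 = 1 := prod_range_zero _

lemma qbin_of_neg {a k : ℤ} (hk : k < 0) : qbin b a k = 0 := if_neg (by omega)

lemma qbin_of_lt {a k : ℤ} (h : a < k) : qbin b a k = 0 := if_neg (by omega)

lemma qbin_add (K L : ℕ) : qbin b ((K : ℤ) + L) K = pq b (K + L) / (pq b K * pq b L) := by
  rw [qbin, if_pos (by omega)]
  simp only [add_sub_cancel_left, Int.toNat_natCast]
  norm_cast

lemma qbin_symm (a k : ℤ) : qbin b a k = qbin b a (a - k) := by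
  unfold qbin
  by_cases h : 0 ≤ k ∧ k ≤ a
  · rw [if_pos h, if_pos (by omega), sub_sub_cancel, mul_comm]
  · rw [if_neg h, if_neg (by omega)]

lemma qbin_zero_left (k : ℤ) : qbin b 0 k = if k = 0 then 1 else 0 := by
  split_ifs with hk
  · simpa [hk, pq] using qbin_add (b := b) 0 0
  · rcases lt_or_gt_of_ne hk with hk | hk
    exacts [qbin_of_neg hk, qbin_of_lt hk]

variable (hb : ∀ k : ℕ, b ^ (k + 1) ≠ 1)
include hb

lemma qbin_zero_right (a : ℕ) : qbin b a 0 = 1 := by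
  have h := qbin_add (b := b) 0 a
  rwa [Nat.cast_zero, zero_add, zero_add, pq_zero, one_mul, div_self (pq_ne_zero hb a)] at h

lemma qbin_self (a : ℕ) : qbin b a a = 1 := by
  rw [qbin_symm, sub_self, qbin_zero_right hb]

lemma qbin_pascal (M : ℕ) (k : ℤ) :
    qbin b ((M : ℤ) + 1) k = qbin b M k + b ^ ((M : ℤ) + 1 - k) * qbin b M (k - 1) := by
  rcases lt_trichotomy k 0 with hk | rfl | hk
  · simp [qbin_of_neg hk, qbin_of_neg (by omega : k - 1 < 0)]
  · have := qbin_zero_right hb (M + 1)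
    push_cast at this
    simp [this, qbin_zero_right hb, qbin_of_neg (show (-1 : ℤ) < 0 by norm_num)]
  obtain ⟨K, rfl⟩ : ∃ K : ℕ, k = K + 1 := ⟨(k - 1).toNat, by omega⟩
  rw [add_sub_cancel_right]
  rcases lt_trichotomy K M with h | rfl | h
  · obtain ⟨L, rfl⟩ : ∃ L, M = K + L + 1 := ⟨M - K - 1, by omega⟩
    have e₁ := qbin_add (b := b) (K + 1) (L + 1)
    have e₂ := qbin_add (b := b) (K + 1) L
    have e₃ := qbin_add (b := b) K (L + 1)
    push_cast at e₁ e₂ e₃ ⊢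
    rw [show (K : ℤ) + L + 1 + 1 = K + 1 + (L + 1) by ring, e₁,
      show (K : ℤ) + L + 1 = K + 1 + L by ring, e₂, show (K : ℤ) + 1 + L = K + (L + 1) by ring, e₃,
      show (K : ℤ) + 1 + (L + 1) - (K + 1) = ((L + 1 : ℕ) : ℤ) by push_cast; ring, zpow_natCast,
      show K + 1 + (L + 1) = K + L + 1 + 1 by ring, show K + 1 + L = K + L + 1 by ring,
      show K + (L + 1) = K + L + 1 by ring, pq_succ b (K + L + 1), pq_succ b K, pq_succ b L]
    have := pq_ne_zero hb (K + L + 1)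
    have := pq_ne_zero hb K
    have := pq_ne_zero hb L
    have := sub_ne_zero.mpr (hb K).symm
    have := sub_ne_zero.mpr (hb L).symm
    field_simp
    ring
  · have h := qbin_self hb (K + 1)
    push_cast at h
    rw [h, qbin_of_lt (by omega : (K : ℤ) < K + 1), sub_self, zpow_zero, one_mul, qbin_self hb,
      zero_add]
  · rw [qbin_of_lt (by omega), qbin_of_lt (by omega), qbin_of_lt (by omega)]
    ring

lemma qbin_pascal' (M : ℕ) (k : ℤ) :
    qbin b ((M : ℤ) + 1) k = b ^ k * qbin b M k + qbin b M (k - 1) := by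
  rw [qbin_symm, qbin_pascal hb, qbin_symm (M : ℤ), qbin_symm (M : ℤ) (_ - 1),
    show (M : ℤ) + 1 - ((M : ℤ) + 1 - k) = k by ring, show (M : ℤ) - ((M : ℤ) + 1 - k) = k - 1 by ring,
    show (M : ℤ) - ((M : ℤ) + 1 - k - 1) = k by ring, add_comm]

lemma qbin_contiguous (M : ℕ) (k : ℤ) :
    (1 - b ^ k) * qbin b M k = (1 - b ^ ((M : ℤ) + 1 - k)) * qbin b M (k - 1) := by
  linear_combination qbin_pascal' hb M k - qbin_pascal hb M k

lemma qbin_pascal_two (N : ℕ) (m : ℤ) :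
    qbin b ((N : ℤ) + 2) m = qbin b N m + (b ^ ((N : ℤ) + 1 - m) + b ^ ((N : ℤ) + 2 - m)) *
      qbin b N (m - 1) + (b ^ ((N : ℤ) + 2 - m)) ^ 2 * qbin b N (m - 2) := by
  have h₁ := qbin_pascal hb (N + 1) m
  have h₂ := qbin_pascal hb N m
  have h₃ := qbin_pascal hb N (m - 1)
  push_cast at h₁
  rw [show (N : ℤ) + 1 + 1 = N + 2 by ring] at h₁
  rw [show (N : ℤ) + 1 - (m - 1) = N + 2 - m by ring, sub_sub, one_add_one_eq_two] at h₃
  linear_combination h₁ + h₂ + b ^ ((N : ℤ) + 2 - m) * h₃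

end GaussianBinomial

def qbinTerm (α β : ℤ) (n : ℕ) (j : ℤ) : F :=
  q ^ (10 * j ^ 2 + α * j) * qbin q (2 * (n : ℤ)) ((n : ℤ) - 5 * j - β)

def qbinSum (α β : ℤ) (n : ℕ) : F := ∑ᶠ j : ℤ, qbinTerm α β n j

section QBinSum

variable (n : ℕ) (α : ℤ)

lemma qbinTerm_eq_zero {β j R : ℤ} (h₁ : n + β ≤ R) (h₂ : n ≤ R + β) (hj : j ∉ Icc (-R) R) :
    qbinTerm α β n j = 0 := by
  rw [mem_Icc, not_and_or, not_le, not_le] at hj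
  rcases hj with hj | hj
  · rw [qbinTerm, qbin_of_lt (by omega), mul_zero]
  · rw [qbinTerm, qbin_of_neg (by omega), mul_zero]

lemma qbinSum_eq_sum (β R : ℤ) (h₁ : n + β ≤ R) (h₂ : n ≤ R + β) :
    qbinSum α β n = ∑ j ∈ Icc (-R) R, qbinTerm α β n j :=
  finsum_eq_sum_of_support_subset _ fun _ hj =>
    not_not.mp fun h => hj (qbinTerm_eq_zero n α h₁ h₂ h)

lemma qbinTerm_reflect (t β j : ℤ) :
    qbinTerm α β n (t - j) = q ^ (10 * t ^ 2 + α * t) * qbinTerm (-20 * t - α) (-5 * t - β) n j := by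
  rw [qbinTerm, qbinTerm, qbin_symm, ← mul_assoc, ← zpow_add₀ q_ne_zero]
  congr 2 <;> ring

-- Multiplied by `q ^ β` so that every exponent is a natural number.
lemma qbinTerm_contiguous (β : ℕ) (j : ℤ) :
    q ^ β * qbinTerm α β n j + q ^ (n + 2 * β + 1) * qbinTerm (α + 5) (β + 1) n j =
      q ^ β * qbinTerm α (β + 1) n j + q ^ n * qbinTerm (α - 5) β n j := by
  obtain ⟨k, hk⟩ : ∃ k : ℤ, k = n - 5 * j - β := ⟨_, rfl⟩
  have hC := qbin_contiguous q_pow_succ_ne_one (2 * n) k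
  have e₁ : q ^ n * q ^ (10 * j ^ 2 + (α - 5) * j) = q ^ β * q ^ (10 * j ^ 2 + α * j) * q ^ k := by
    simp only [← zpow_natCast, ← zpow_add₀ q_ne_zero, hk]; ring_nf
  have e₂ : q ^ (n + 2 * β + 1) * q ^ (10 * j ^ 2 + (α + 5) * j) =
      q ^ β * q ^ (10 * j ^ 2 + α * j) * q ^ (((2 * n : ℕ) : ℤ) + 1 - k) := by
    simp only [← zpow_natCast, ← zpow_add₀ q_ne_zero, hk]; push_cast; ring_nf
  simp only [qbinTerm, Nat.cast_mul, Nat.cast_ofNat] at hC e₂ ⊢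
  rw [show (n : ℤ) - 5 * j - (β + 1) = k - 1 by rw [hk]; ring, ← hk]
  linear_combination q ^ β * q ^ (10 * j ^ 2 + α * j) * hC + qbin q (2 * n) (k - 1) * e₂ -
    qbin q (2 * n) k * e₁

lemma qbinTerm_succ (β : ℕ) (j : ℤ) :
    qbinTerm α β (n + 1) j = qbinTerm α (β - 1) n j +
      (q ^ (n + β) + q ^ (n + β + 1)) * qbinTerm (α + 5) β n j +
      q ^ (2 * (n + β + 1)) * qbinTerm (α + 10) (β + 1) n j := by
  obtain ⟨m, hm⟩ : ∃ m : ℤ, m = n + 1 - 5 * j - β := ⟨_, rfl⟩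
  have hP := qbin_pascal_two q_pow_succ_ne_one (2 * n) m
  have e₁ : q ^ (n + β) * q ^ (10 * j ^ 2 + (α + 5) * j) =
      q ^ (10 * j ^ 2 + α * j) * q ^ (((2 * n : ℕ) : ℤ) + 1 - m) := by
    simp only [← zpow_natCast, ← zpow_add₀ q_ne_zero, hm]; push_cast; ring_nf
  have e₂ : q ^ (n + β + 1) * q ^ (10 * j ^ 2 + (α + 5) * j) =
      q ^ (10 * j ^ 2 + α * j) * q ^ (((2 * n : ℕ) : ℤ) + 2 - m) := by
    simp only [← zpow_natCast, ← zpow_add₀ q_ne_zero, hm]; push_cast; ring_nf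
  have e₃ : q ^ (2 * (n + β + 1)) * q ^ (10 * j ^ 2 + (α + 10) * j) =
      q ^ (10 * j ^ 2 + α * j) * (q ^ (((2 * n : ℕ) : ℤ) + 2 - m)) ^ 2 := by
    simp only [← zpow_natCast, ← zpow_add₀ q_ne_zero, ← zpow_mul, hm]; push_cast; ring_nf
  simp only [qbinTerm, Nat.cast_mul, Nat.cast_ofNat] at hP e₁ e₂ e₃ ⊢
  rw [show 2 * ((n + 1 : ℕ) : ℤ) = 2 * n + 2 by push_cast; ring,
    show ((n + 1 : ℕ) : ℤ) - 5 * j - β = m by rw [hm]; push_cast; ring,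
    show (n : ℤ) - 5 * j - (β - 1) = m by rw [hm]; ring,
    show (n : ℤ) - 5 * j - β = m - 1 by rw [hm]; ring,
    show (n : ℤ) - 5 * j - (β + 1) = m - 2 by rw [hm]; ring]
  linear_combination q ^ (10 * j ^ 2 + α * j) * hP - qbin q (2 * n) (m - 1) * (e₁ + e₂) -
    qbin q (2 * n) (m - 2) * e₃

lemma qbinSum_reflect (t β : ℤ) :
    qbinSum α β n = q ^ (10 * t ^ 2 + α * t) * qbinSum (-20 * t - α) (-5 * t - β) n := by
  rw [qbinSum, qbinSum, ← finsum_comp_equiv (Equiv.subLeft t), mul_finsum]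
  exact finsum_congr fun j => qbinTerm_reflect n α t β j

lemma qbinSum_contiguous (β : ℕ) :
    q ^ β * qbinSum α β n + q ^ (n + 2 * β + 1) * qbinSum (α + 5) (β + 1) n =
      q ^ β * qbinSum α (β + 1) n + q ^ n * qbinSum (α - 5) β n := by
  rw [qbinSum_eq_sum n α β (n + β + 1) (by omega) (by omega),
    qbinSum_eq_sum n (α + 5) (β + 1) (n + β + 1) (by omega) (by omega),
    qbinSum_eq_sum n α (β + 1) (n + β + 1) (by omega) (by omega),
    qbinSum_eq_sum n (α - 5) β (n + β + 1) (by omega) (by omega)]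
  simp only [mul_sum, ← sum_add_distrib]
  exact sum_congr rfl fun j _ => qbinTerm_contiguous n α β j

lemma qbinSum_succ (β : ℕ) :
    qbinSum α β (n + 1) = qbinSum α (β - 1) n + (q ^ (n + β) + q ^ (n + β + 1)) *
      qbinSum (α + 5) β n + q ^ (2 * (n + β + 1)) * qbinSum (α + 10) (β + 1) n := by
  rw [qbinSum_eq_sum (n + 1) α β (n + β + 1) (by omega) (by omega),
    qbinSum_eq_sum n α (β - 1) (n + β + 1) (by omega) (by omega),
    qbinSum_eq_sum n (α + 5) β (n + β + 1) (by omega) (by omega),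
    qbinSum_eq_sum n (α + 10) (β + 1) (n + β + 1) (by omega) (by omega)]
  simp only [mul_sum, ← sum_add_distrib]
  exact sum_congr rfl fun j _ => qbinTerm_succ n α β j

end QBinSum

lemma qbinSum_neg_left (n : ℕ) (α β : ℤ) : qbinSum (-α) β n = qbinSum α (-β) n := by
  simpa using qbinSum_reflect n (-α) 0 β

lemma qbinSum_ten_sub (n k : ℕ) (β : ℤ) :
    qbinSum (10 - k) β n = q ^ k * qbinSum (10 + k) (5 - β) n := by
  rw [qbinSum_reflect n _ (-1)]
  congr 1
  · rw [← zpow_natCast]; congr 1; ring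
  · congr 1; ring

lemma qbinSum_zero_zero (α : ℤ) : qbinSum α 0 0 = 1 := by
  rw [qbinSum, finsum_eq_single _ 0 fun j hj => ?_]
  · simp [qbinTerm, qbin_zero_left]
  · simp [qbinTerm, qbin_zero_left, hj]

lemma qbinSum_zero_of_not_dvd (α : ℤ) {β : ℤ} (hβ : ¬ 5 ∣ β) : qbinSum α β 0 = 0 :=
  (finsum_congr fun j => by
    simp only [qbinTerm, CharP.cast_eq_zero, mul_zero, zero_sub, qbin_zero_left, mul_ite, mul_one,
      ite_eq_right_iff]
    omega).trans finsum_zero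

lemma P30_eq (n : ℕ) : P30 n = qbinSum 3 0 n - q * qbinSum 7 1 n := by
  have h₁ : ∑ᶠ j : ℤ, q ^ (10 * j ^ 2 + 3 * j) * qbin q (2 * (n : ℤ)) ((n : ℤ) - 5 * j) =
      qbinSum 3 0 n := finsum_congr fun j => by rw [qbinTerm, sub_zero]
  have h₂ : ∑ᶠ j : ℤ, q ^ (10 * j ^ 2 + 13 * j + 4) * qbin q (2 * (n : ℤ)) ((n : ℤ) - 5 * j - 4) =
      q ^ 4 * qbinSum 13 4 n := by
    rw [qbinSum, mul_finsum]
    exact finsum_congr fun j => by rw [qbinTerm, zpow_add₀ q_ne_zero, zpow_ofNat]; ring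
  have h₃ := qbinSum_ten_sub n 3 1
  norm_num at h₃
  rw [P30, h₁, h₂, h₃]
  ring

def Q30 (n : ℕ) : F := qbinSum 8 1 n - qbinSum 8 3 n

-- In this proof and the next the coefficients come from reducing both sides modulo the
-- contiguous relations, one power of `q ^ n` at a time; the factor in front clears the negative
-- powers of `q` that this produces.
lemma P30_succ (n : ℕ) : P30 (n + 1) = P30 n + q ^ (n + 1) * Q30 n := by
  have s₁ := qbinSum_succ n 3 0
  have s₂ := qbinSum_succ n 7 1
  have r₁ := qbinSum_ten_sub n 2 4
  have r₂ := qbinSum_ten_sub n 3 1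
  have r₃ := qbinSum_ten_sub n 7 3
  have c₁ := qbinSum_contiguous n (-3) 0
  have c₂ := qbinSum_contiguous n 2 0
  have c₃ := qbinSum_contiguous n 7 0
  have c₄ := qbinSum_contiguous n 8 0
  have c₅ := qbinSum_contiguous n 8 3
  norm_num [qbinSum_neg_left] at s₁ s₂ r₁ r₂ r₃ c₁ c₂ c₃ c₄ c₅
  rw [P30_eq, P30_eq, Q30]
  refine mul_left_cancel₀ (pow_ne_zero 2 q_ne_zero) ?_
  linear_combination q ^ 2 * s₁ - q ^ 3 * s₂ + q ^ (n + 3) * r₁ + q ^ (2 * n + 4) * r₂ +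
    q ^ (2 * n) * r₃ - q ^ 2 * c₁ - q ^ (n + 3) * c₂ - q ^ 3 * c₃ + q ^ (n + 3) * c₄ + q ^ n * c₅

lemma Q30_succ (n : ℕ) :
    q * Q30 (n + 1) = q ^ n * (1 + q - q ^ (2 * n)) * P30 n + q ^ (2 * n + 1) * (1 + q) * Q30 n := by
  have s₁ := qbinSum_succ n 8 1
  have s₂ := qbinSum_succ n 8 3
  have r₁ := qbinSum_ten_sub n 2 1
  have r₂ := qbinSum_ten_sub n 2 3
  have r₃ := qbinSum_ten_sub n 3 2
  have r₄ := qbinSum_ten_sub n 3 3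
  have r₅ := qbinSum_ten_sub n 3 4
  have r₆ := qbinSum_ten_sub n 8 1
  have r₇ := qbinSum_ten_sub n 8 3
  have c₁ := qbinSum_contiguous n 2 0
  have c₂ := qbinSum_contiguous n 3 0
  have c₃ := qbinSum_contiguous n 7 1
  have c₄ := qbinSum_contiguous n 7 3
  have c₅ := qbinSum_contiguous n 8 0
  have c₆ := qbinSum_contiguous n 8 1
  norm_num [qbinSum_neg_left] at s₁ s₂ r₁ r₂ r₃ r₄ r₅ r₆ r₇ c₁ c₂ c₃ c₄ c₅ c₆
  rw [P30_eq, Q30, Q30]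
  refine mul_left_cancel₀ (pow_ne_zero 3 q_ne_zero) ?_
  linear_combination q ^ 4 * s₁ - q ^ 4 * s₂ - q ^ (2 * n + 5) * r₁ +
    (q ^ (2 * n + 4) + q ^ (2 * n + 5)) * r₂ + (q ^ (n + 4) + q ^ (n + 5)) * r₃ + q ^ (n + 3) * r₄ -
    q ^ (n + 3) * r₅ + q ^ (2 * n + 4) * r₆ - q ^ (2 * n) * r₇ - q ^ (2 * n + 3) * c₁ -
    q ^ (n + 3) * c₂ + (q ^ (n + 3) + q ^ (n + 4)) * c₃ - q ^ n * c₄ + q ^ 4 * c₅ + q ^ 3 * c₆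

lemma P30_zero : P30 0 = 1 := by
  rw [P30_eq, qbinSum_zero_zero, qbinSum_zero_of_not_dvd _ (by omega), mul_zero, sub_zero]

lemma Q30_zero : Q30 0 = 0 := by
  rw [Q30, qbinSum_zero_of_not_dvd _ (by omega), qbinSum_zero_of_not_dvd _ (by omega), sub_zero]

lemma P30_one : P30 1 = 1 := by
  simpa [P30_zero, Q30_zero] using P30_succ 0

lemma P30_two : P30 2 = 1 + q ^ 2 := by
  have hQ : Q30 1 = 1 := mul_left_cancel₀ q_ne_zero (by simpa [P30_zero, Q30_zero] using Q30_succ 0)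
  simpa [P30_one, hQ] using P30_succ 1

lemma P30_add_two (n : ℕ) :
    P30 (n + 2) = (1 + q ^ (2 * n + 1) + q ^ (2 * n + 2)) * P30 (n + 1) - q ^ (4 * n + 1) * P30 n := by
  linear_combination P30_succ (n + 1) + q ^ (n + 1) * Q30_succ n -
    q ^ (2 * n + 1) * (1 + q) * P30_succ n

theorem stmt10 :
    (∀ n : ℕ, 3 ≤ n →
        P30 n = (1 + q ^ (2 * n - 3) + q ^ (2 * n - 2)) * P30 (n - 1)
          - q ^ (4 * n - 7) * P30 (n - 2)) ∧
      P30 1 = 1 ∧ P30 2 = 1 + q ^ 2 := by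
  refine ⟨fun n hn => ?_, P30_one, P30_two⟩
  obtain ⟨m, rfl⟩ : ∃ m, n = m + 2 := ⟨n - 2, by omega⟩
  rw [show 2 * (m + 2) - 3 = 2 * m + 1 by omega, show 2 * (m + 2) - 2 = 2 * m + 2 by omega,
    show 4 * (m + 2) - 7 = 4 * m + 1 by omega, show m + 2 - 1 = m + 1 by omega, Nat.add_sub_cancel]
  exact P30_add_two m
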